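/- For natural n, the deformed (u,v)-(s,t)-binomial power satisfies the addition recurrence (x ⊕_{u,v} y)^{(n+1)} = x·(ux ⊕_{u,v} φy)^{(n)} + y·(φ'x ⊕_{u,v} vy)^{(n)}. -/
import Mathlib


noncomputable section

def genFib (φ φ' : ℝ) (n : ℕ) : ℝ := (φ ^ n - φ' ^ n) / (φ - φ')

def fibtorial (φ φ' : ℝ) (n : ℕ) : ℝ := ∏ j ∈ Finset.range n, genFib φ φ' (j + 1)

def fibonomial (φ φ' : ℝ) (n k : ℕ) : ℝ :=
  fibtorial φ φ' n / (fibtorial φ φ' k * fibtorial φ φ' (n - k))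

/-- The (u,v)-deformed (s,t)-binomial power (x ⊕_{u,v} y)^{(n)}. -/
def defPow (φ φ' u v x y : ℝ) (n : ℕ) : ℝ :=
  ∑ k ∈ Finset.range (n + 1),
    fibonomial φ φ' n k * u ^ Nat.choose (n - k) 2 * v ^ Nat.choose k 2 *
      x ^ (n - k) * y ^ k

lemma genFib_add (φ φ' : ℝ) (hne : φ - φ' ≠ 0) (m k : ℕ) :
    genFib φ φ' (m + k) = φ ^ k * genFib φ φ' m + φ' ^ m * genFib φ φ' k := by
  unfold genFib
  field_simp
  ring

lemma fibtorial_succ (φ φ' : ℝ) (n : ℕ) :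
    fibtorial φ φ' (n + 1) = fibtorial φ φ' n * genFib φ φ' (n + 1) := by
  unfold fibtorial
  rw [Finset.prod_range_succ]

lemma fibtorial_zero (φ φ' : ℝ) : fibtorial φ φ' 0 = 1 := by
  simp [fibtorial]

lemma fibtorial_ne_zero (φ φ' : ℝ) (m : ℕ)
    (h : ∀ j, 1 ≤ j → j ≤ m → genFib φ φ' j ≠ 0) : fibtorial φ φ' m ≠ 0 := by
  unfold fibtorial
  rw [Finset.prod_ne_zero_iff]
  intro j hj
  exact h (j + 1) (by omega) (by simpa using Finset.mem_range.mp hj)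

lemma choose_two_succ (n : ℕ) : (n + 1).choose 2 = n.choose 2 + n := by
  rw [Nat.choose_succ_succ, Nat.choose_one_right, Nat.add_comm]

lemma fibonomial_zero (φ φ' : ℝ) (n : ℕ) (h : fibtorial φ φ' n ≠ 0) :
    fibonomial φ φ' n 0 = 1 := by
  simp [fibonomial, fibtorial_zero, div_self h]

lemma fibonomial_self (φ φ' : ℝ) (n : ℕ) (h : fibtorial φ φ' n ≠ 0) :
    fibonomial φ φ' n n = 1 := by
  simp [fibonomial, fibtorial_zero, div_self h]

lemma fibonomial_pascal (φ φ' : ℝ) (hne : φ - φ' ≠ 0) (k m : ℕ)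
    (hk : fibtorial φ φ' k ≠ 0) (hm : fibtorial φ φ' m ≠ 0)
    (hk1 : genFib φ φ' (k + 1) ≠ 0) (hm1 : genFib φ φ' (m + 1) ≠ 0) :
    fibonomial φ φ' (k + m + 2) (k + 1) =
      φ ^ (k + 1) * fibonomial φ φ' (k + m + 1) (k + 1) +
      φ' ^ (m + 1) * fibonomial φ φ' (k + m + 1) k := by
  have h1 : genFib φ φ' (k + m + 2) =
      φ ^ (k + 1) * genFib φ φ' (m + 1) + φ' ^ (m + 1) * genFib φ φ' (k + 1) := by
    have := genFib_add φ φ' hne (m + 1) (k + 1)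
    rw [show m + 1 + (k + 1) = k + m + 2 by ring] at this
    exact this
  unfold fibonomial
  have e1 : k + m + 2 - (k + 1) = m + 1 := by omega
  have e2 : k + m + 1 - (k + 1) = m := by omega
  have e3 : k + m + 1 - k = m + 1 := by omega
  rw [e1, e2, e3, show k + m + 2 = (k + m + 1) + 1 from rfl, fibtorial_succ,
    fibtorial_succ φ φ' k, fibtorial_succ φ φ' m, h1]
  field_simp

theorem defPow_succ (s t : ℝ) (hs : s ≠ 0) (ht : t ≠ 0)
    (hdisc : s ^ 2 + 4 * t > 0) (φ φ' : ℝ)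
    (hφ : φ = (s + Real.sqrt (s ^ 2 + 4 * t)) / 2)
    (hφ' : φ' = (s - Real.sqrt (s ^ 2 + 4 * t)) / 2)
    (u v x y : ℝ) (n : ℕ)
    (hnz : ∀ j, 1 ≤ j → j ≤ n + 1 → genFib φ φ' j ≠ 0) :
    defPow φ φ' u v x y (n + 1) =
      x * defPow φ φ' u v (u * x) (φ * y) n + y * defPow φ φ' u v (φ' * x) (v * y) n := by
  have hne : φ - φ' ≠ 0 := by
    rw [hφ, hφ']
    have : Real.sqrt (s ^ 2 + 4 * t) > 0 := Real.sqrt_pos.mpr hdisc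
    intro h
    nlinarith [this]
  have hft : ∀ m, m ≤ n + 1 → fibtorial φ φ' m ≠ 0 := fun m hm =>
    fibtorial_ne_zero φ φ' m (fun j hj1 hj2 => hnz j hj1 (by omega))
  unfold defPow
  rw [Finset.mul_sum, Finset.mul_sum, Finset.sum_range_succ' _ (n + 1),
    Finset.sum_range_succ _ n, Finset.sum_range_succ'
      (fun k => x * (fibonomial φ φ' n k * u ^ (n - k).choose 2 * v ^ k.choose 2 *
        (u * x) ^ (n - k) * (φ * y) ^ k)) n,
    Finset.sum_range_succ
      (fun k => y * (fibonomial φ φ' n k * u ^ (n - k).choose 2 * v ^ k.choose 2 *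
        (φ' * x) ^ (n - k) * (v * y) ^ k)) n]
  have hb0 : fibonomial φ φ' (n + 1) 0 * u ^ (n + 1 - 0).choose 2 * v ^ Nat.choose 0 2 *
      x ^ (n + 1 - 0) * y ^ 0 =
      x * (fibonomial φ φ' n 0 * u ^ (n - 0).choose 2 * v ^ Nat.choose 0 2 *
        (u * x) ^ (n - 0) * (φ * y) ^ 0) := by
    simp only [Nat.sub_zero, pow_zero, mul_one, fibonomial_zero φ φ' (n + 1) (hft _ le_rfl),
      fibonomial_zero φ φ' n (hft _ (by omega)), choose_two_succ, mul_pow, pow_add]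
    ring
  have hbn : fibonomial φ φ' (n + 1) (n + 1) * u ^ (n + 1 - (n + 1)).choose 2 *
      v ^ (n + 1).choose 2 * x ^ (n + 1 - (n + 1)) * y ^ (n + 1) =
      y * (fibonomial φ φ' n n * u ^ (n - n).choose 2 * v ^ n.choose 2 *
        (φ' * x) ^ (n - n) * (v * y) ^ n) := by
    simp only [Nat.sub_self, pow_zero, mul_one, fibonomial_self φ φ' (n + 1) (hft _ le_rfl),
      fibonomial_self φ φ' n (hft _ (by omega)), choose_two_succ, mul_pow, pow_add]
    ring
  have hmid : ∀ k ∈ Finset.range n,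
      fibonomial φ φ' (n + 1) (k + 1) * u ^ (n + 1 - (k + 1)).choose 2 *
        v ^ (k + 1).choose 2 * x ^ (n + 1 - (k + 1)) * y ^ (k + 1) =
      x * (fibonomial φ φ' n (k + 1) * u ^ (n - (k + 1)).choose 2 * v ^ (k + 1).choose 2 *
        (u * x) ^ (n - (k + 1)) * (φ * y) ^ (k + 1)) +
      y * (fibonomial φ φ' n k * u ^ (n - k).choose 2 * v ^ k.choose 2 *
        (φ' * x) ^ (n - k) * (v * y) ^ k) := by
    intro k hk
    have hkn : k < n := Finset.mem_range.mp hk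
    obtain ⟨m, hm⟩ : ∃ m, n = k + m + 1 := ⟨n - k - 1, by omega⟩
    subst hm
    have e1 : k + m + 1 + 1 - (k + 1) = m + 1 := by omega
    have e2 : k + m + 1 - (k + 1) = m := by omega
    have e3 : k + m + 1 - k = m + 1 := by omega
    rw [e1, e2, e3, show k + m + 1 + 1 = k + m + 2 from rfl,
      fibonomial_pascal φ φ' hne k m (hft k (by omega)) (hft m (by omega))
        (hnz (k + 1) (by omega) (by omega)) (hnz (m + 1) (by omega) (by omega)),
      choose_two_succ m, choose_two_succ k, mul_pow, mul_pow, mul_pow, mul_pow,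
      pow_add, pow_add]
    ring
  rw [Finset.sum_congr rfl hmid, hb0, hbn]
  simp only [Finset.sum_add_distrib]
  ring
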